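/- arXiv:2206.11198 — 2 statements merged into one kernel-verified Lean document; each statement's English description precedes it below -/
import Mathlib

section
/- Assume additionally that s < 1. Then the sequence M_t := p_t(1 − p_t) / (1 − s)^t, t ≥ 0, is a martingale with respect to the filtration (ℱ_t)_{t≥0}. -/
/-! Since `∑ γ i = 1`, the update reads `p' = p + D` with `D = ∑_{i ≥ 1} γ i (x i - p)`.
Conditionally on `ℱ_t` the centred samples `x i - p` have mean `0`, are pairwise uncorrelated
and have variance `p (1 - p)`, so `D` has conditional mean `0` and conditional second moment
`s p (1 - p)`. Expanding `p' (1 - p') = p (1 - p) + (1 - 2p) D - D²` then gives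
`E[p' (1 - p') | ℱ_t] = (1 - s) p (1 - p)`. -/

open MeasureTheory ProbabilityTheory Finset

/-- The neutral-bit frequency process of the general univariate EDA with sample
size `lam` and update weights `γ 0, γ 1, …, γ lam`.  Conditionally on `F t`, the
samples `x t 1, …, x t lam` are i.i.d. Bernoulli with parameter `p t` (encoded
via all conditional mixed moments), and
`p (t+1) = γ 0 * p t + ∑ i ∈ [1..lam], γ i * x t i`. -/
structure NeutralBitEDA {Ω : Type*} [MeasurableSpace Ω] (μ : Measure Ω)
    (lam : ℕ) (γ : ℕ → ℝ) where
  F : Filtration ℕ (inferInstance : MeasurableSpace Ω)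
  p : ℕ → Ω → ℝ
  x : ℕ → ℕ → Ω → ℝ
  adapted : Adapted F p
  integrable : ∀ t, Integrable (p t) μ
  meas_x : ∀ t i, i ∈ Finset.Icc 1 lam → StronglyMeasurable[F (t + 1)] (x t i)
  p_zero : ∀ᵐ ω ∂μ, p 0 ω = 1 / 2
  p_range : ∀ t, ∀ᵐ ω ∂μ, p t ω ∈ Set.Icc (0 : ℝ) 1
  x_binary : ∀ t i, i ∈ Finset.Icc 1 lam → ∀ᵐ ω ∂μ, x t i ω = 0 ∨ x t i ω = 1
  cond_iid : ∀ t, ∀ S : Finset ℕ, S ⊆ Finset.Icc 1 lam →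
    μ[fun ω => ∏ i ∈ S, x t i ω | F t] =ᵐ[μ] fun ω => p t ω ^ S.card
  update : ∀ t, ∀ᵐ ω ∂μ,
    p (t + 1) ω = γ 0 * p t ω + ∑ i ∈ Finset.Icc 1 lam, γ i * x t i ω

open Filter
open scoped ENNReal

section CondExp

variable {Ω : Type*} {m m₀ : MeasurableSpace Ω} {μ : Measure Ω}

lemma condExp_sum_smul_ae_eq {ι : Type*} {s : Finset ι} (c : ι → ℝ) {f g : ι → Ω → ℝ}
    (hf : ∀ i ∈ s, Integrable (f i) μ) (hfg : ∀ i ∈ s, μ[f i | m] =ᵐ[μ] g i) :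
    μ[∑ i ∈ s, c i • f i | m] =ᵐ[μ] ∑ i ∈ s, c i • g i := by
  have hsmul : ∀ᵐ ω ∂μ, ∀ i ∈ s, μ[c i • f i | m] ω = c i • g i ω := by
    refine (eventually_all_finset s).2 fun i hi => ?_
    filter_upwards [condExp_smul (c i) (f i) m, hfg i hi] with ω h1 h2
    simp [h1, h2]
  filter_upwards [condExp_finsetSum (fun i hi => (hf i hi).smul (c i)) m, hsmul] with ω h1 h2
  simp only [h1, Finset.sum_apply]
  exact Finset.sum_congr rfl h2

lemma condExp_sum_smul_mul_self_ae_eq {ι : Type*} [DecidableEq ι] {s : Finset ι} (c : ι → ℝ)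
    {D : ι → Ω → ℝ} {V : Ω → ℝ} (hD : ∀ i ∈ s, ∀ j ∈ s, Integrable (D i * D j) μ)
    (hcov : ∀ i ∈ s, ∀ j ∈ s, μ[D i * D j | m] =ᵐ[μ] if i = j then V else 0) :
    μ[(∑ i ∈ s, c i • D i) * (∑ i ∈ s, c i • D i) | m] =ᵐ[μ] (∑ i ∈ s, c i ^ 2) • V := by
  have hexpand : (∑ i ∈ s, c i • D i) * (∑ i ∈ s, c i • D i)
      = ∑ i ∈ s, c i • ∑ j ∈ s, c j • (D i * D j) := by
    simp only [Finset.sum_mul_sum, Finset.smul_sum, smul_mul_smul_comm, smul_smul]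
  rw [hexpand]
  refine (condExp_sum_smul_ae_eq c (f := fun i => ∑ j ∈ s, c j • (D i * D j))
    (fun i hi => integrable_finsetSum' _ fun j hj => (hD i hi j hj).smul (c j))
    fun i hi => condExp_sum_smul_ae_eq c (hD i hi) (hcov i hi)).trans (.of_eq ?_)
  simp only [smul_ite, smul_zero, Finset.sum_ite_eq, Finset.sum_smul, smul_smul, sq]
  exact Finset.sum_congr rfl fun i hi => by rw [if_pos hi]

variable [IsFiniteMeasure μ]

lemma integrable_mul_of_memLp_top {f g : Ω → ℝ} (hf : MemLp f ∞ μ) (hg : MemLp g ∞ μ) :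
    Integrable (f * g) μ :=
  (hg.mul hf).integrable le_top

lemma condExp_sub_mul_sub_ae_eq (hm : m ≤ m₀) {P X Y : Ω → ℝ} (hP : StronglyMeasurable[m] P)
    (hPb : MemLp P ∞ μ) (hX : MemLp X ∞ μ) (hY : MemLp Y ∞ μ)
    (hXc : μ[X | m] =ᵐ[μ] P) (hYc : μ[Y | m] =ᵐ[μ] P) :
    μ[(X - P) * (Y - P) | m] =ᵐ[μ] μ[X * Y | m] - P * P := by
  have hexpand : (X - P) * (Y - P) = X * Y - P * (X + Y) + P * P := by ring
  have hXY := integrable_mul_of_memLp_top hX hY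
  have hPXY := integrable_mul_of_memLp_top hPb (hX.add hY)
  have hPP := integrable_mul_of_memLp_top hPb hPb
  rw [hexpand]
  filter_upwards [condExp_add (hXY.sub hPXY) hPP m, condExp_sub hXY hPXY m,
    condExp_mul_of_stronglyMeasurable_left hP hPXY ((hX.add hY).integrable le_top),
    condExp_add (hX.integrable le_top) (hY.integrable le_top) m, hXc, hYc]
    with ω h1 h2 h3 h4 h5 h6
  rw [h1, Pi.add_apply, h2, Pi.sub_apply, h3, Pi.mul_apply, h4, Pi.add_apply, h5, h6,
    condExp_of_stronglyMeasurable hm (hP.mul hP) hPP]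
  simp only [Pi.sub_apply, Pi.mul_apply]
  ring

lemma condExp_add_mul_one_sub_add_ae_eq (hm : m ≤ m₀) {P D : Ω → ℝ}
    (hP : StronglyMeasurable[m] P) (hPb : MemLp P ∞ μ) (hD : MemLp D ∞ μ)
    (hD0 : μ[D | m] =ᵐ[μ] 0) :
    μ[(P + D) * (1 - (P + D)) | m] =ᵐ[μ] P * (1 - P) - μ[D * D | m] := by
  have hexpand : (P + D) * (1 - (P + D)) = P * (1 - P) + (1 - 2 * P) * D - D * D := by ring
  have hQ : StronglyMeasurable[m] (1 - P) := stronglyMeasurable_const.sub hP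
  have hR : StronglyMeasurable[m] (1 - 2 * P) :=
    stronglyMeasurable_const.sub (stronglyMeasurable_const.mul hP)
  have hPQ : Integrable (P * (1 - P)) μ :=
    integrable_mul_of_memLp_top hPb ((memLp_const 1).sub hPb)
  have hRD : Integrable ((1 - 2 * P) * D) μ :=
    integrable_mul_of_memLp_top ((memLp_const 1).sub (hPb.const_mul 2)) hD
  rw [hexpand]
  filter_upwards [condExp_sub (hPQ.add hRD) (integrable_mul_of_memLp_top hD hD) m,
    condExp_add hPQ hRD m,
    condExp_mul_of_stronglyMeasurable_left hR hRD (hD.integrable le_top), hD0]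
    with ω h1 h2 h3 h4
  rw [h1, Pi.sub_apply, h2, Pi.add_apply, h3, Pi.mul_apply, h4,
    condExp_of_stronglyMeasurable hm (hP.mul hQ) hPQ]
  simp

end CondExp

namespace NeutralBitEDA

variable {Ω : Type*} [MeasurableSpace Ω] {μ : Measure Ω} {lam : ℕ} {γ : ℕ → ℝ}
  (E : NeutralBitEDA μ lam γ)

lemma memLp_p (t : ℕ) : MemLp (E.p t) ∞ μ := by
  refine memLp_top_of_bound ((E.adapted t).mono (E.F.le t) le_rfl).aestronglyMeasurable 1 ?_
  filter_upwards [E.p_range t] with ω hω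
  rw [Real.norm_eq_abs, abs_le]
  exact ⟨by linarith [hω.1], hω.2⟩

lemma memLp_x (t : ℕ) {i : ℕ} (hi : i ∈ Icc 1 lam) : MemLp (E.x t i) ∞ μ := by
  refine memLp_top_of_bound ((E.meas_x t i hi).mono (E.F.le _)).aestronglyMeasurable 1 ?_
  filter_upwards [E.x_binary t i hi] with ω hω
  rcases hω with hω | hω <;> simp [hω]

lemma condExp_x (t : ℕ) {i : ℕ} (hi : i ∈ Icc 1 lam) : μ[E.x t i | E.F t] =ᵐ[μ] E.p t := by
  simpa using E.cond_iid t {i} (by simpa using hi)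

lemma condExp_x_mul_x (t : ℕ) {i j : ℕ} (hi : i ∈ Icc 1 lam) (hj : j ∈ Icc 1 lam) :
    μ[E.x t i * E.x t j | E.F t] =ᵐ[μ] if i = j then E.p t else E.p t * E.p t := by
  split_ifs with hij
  · subst hij
    have hsq : E.x t i * E.x t i =ᵐ[μ] E.x t i := by
      filter_upwards [E.x_binary t i hi] with ω hω
      rcases hω with hω | hω <;> simp [hω]
    exact (condExp_congr_ae hsq).trans (E.condExp_x t hi)
  · have h := E.cond_iid t {i, j} (by simp [insert_subset_iff, hi, hj])
    simp only [prod_pair hij, card_pair hij] at h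
    exact h.trans (.of_eq (funext fun ω => sq (E.p t ω)))

lemma p_succ_ae_eq (hsum : ∑ i ∈ range (lam + 1), γ i = 1) (t : ℕ) :
    E.p (t + 1) =ᵐ[μ] E.p t + ∑ i ∈ Icc 1 lam, γ i • (E.x t i - E.p t) := by
  have hγ0 : γ 0 = 1 - ∑ i ∈ Icc 1 lam, γ i := by
    rw [← hsum, range_eq_Ico, sum_eq_sum_Ico_succ_bot (by omega), Ico_add_one_right_eq_Icc]
    ring
  filter_upwards [E.update t] with ω h
  simp only [h, hγ0, Pi.add_apply, Finset.sum_apply, Pi.smul_apply, Pi.sub_apply, smul_eq_mul,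
    mul_sub, sum_sub_distrib, ← sum_mul]
  ring

variable [IsFiniteMeasure μ]

lemma condExp_x_sub_p_mul_x_sub_p (t : ℕ) {i j : ℕ} (hi : i ∈ Icc 1 lam) (hj : j ∈ Icc 1 lam) :
    μ[(E.x t i - E.p t) * (E.x t j - E.p t) | E.F t] =ᵐ[μ]
      if i = j then E.p t * (1 - E.p t) else 0 := by
  filter_upwards [condExp_sub_mul_sub_ae_eq (E.F.le t) (E.adapted t).stronglyMeasurable
    (E.memLp_p t) (E.memLp_x t hi) (E.memLp_x t hj) (E.condExp_x t hi) (E.condExp_x t hj),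
    E.condExp_x_mul_x t hi hj] with ω h1 h2
  rw [h1, Pi.sub_apply, h2]
  split_ifs <;> simp only [Pi.mul_apply, Pi.sub_apply, Pi.one_apply, Pi.zero_apply] <;> ring

lemma condExp_p_succ_mul_one_sub (hsum : ∑ i ∈ range (lam + 1), γ i = 1) (t : ℕ) :
    μ[fun ω => E.p (t + 1) ω * (1 - E.p (t + 1) ω) | E.F t] =ᵐ[μ]
      fun ω => (1 - ∑ i ∈ Icc 1 lam, γ i ^ 2) * (E.p t ω * (1 - E.p t ω)) := by
  set D := ∑ i ∈ Icc 1 lam, γ i • (E.x t i - E.p t)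
  have hD : MemLp D ∞ μ :=
    memLp_finsetSum' _ fun i hi => ((E.memLp_x t hi).sub (E.memLp_p t)).const_smul (γ i)
  have hD0 : μ[D | E.F t] =ᵐ[μ] 0 := by
    refine (condExp_sum_smul_ae_eq γ (g := fun _ => 0)
      (fun i hi => ((E.memLp_x t hi).sub (E.memLp_p t)).integrable le_top) fun i hi => ?_).trans
      (.of_eq (by simp))
    filter_upwards [condExp_sub ((E.memLp_x t hi).integrable le_top) (E.integrable t) (E.F t),
      E.condExp_x t hi] with ω h1 h2
    rw [h1, Pi.sub_apply, h2, condExp_of_stronglyMeasurable (E.F.le t)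
      (E.adapted t).stronglyMeasurable (E.integrable t), sub_self, Pi.zero_apply]
  have hDD : μ[D * D | E.F t] =ᵐ[μ] (∑ i ∈ Icc 1 lam, γ i ^ 2) • (E.p t * (1 - E.p t)) :=
    condExp_sum_smul_mul_self_ae_eq γ (fun i hi j hj => integrable_mul_of_memLp_top
      ((E.memLp_x t hi).sub (E.memLp_p t)) ((E.memLp_x t hj).sub (E.memLp_p t)))
      fun i hi j hj => E.condExp_x_sub_p_mul_x_sub_p t hi hj
  have hQ : (fun ω => E.p (t + 1) ω * (1 - E.p (t + 1) ω)) =ᵐ[μ]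
      (E.p t + D) * (1 - (E.p t + D)) := by
    filter_upwards [E.p_succ_ae_eq hsum t] with ω h
    simp only [h, Pi.add_apply, Pi.mul_apply, Pi.sub_apply, Pi.one_apply, D]
  filter_upwards [condExp_congr_ae hQ, condExp_add_mul_one_sub_add_ae_eq (E.F.le t)
    (E.adapted t).stronglyMeasurable (E.memLp_p t) hD hD0, hDD] with ω h1 h2 h3
  rw [h1, h2, Pi.sub_apply, h3]
  simp only [Pi.mul_apply, Pi.sub_apply, Pi.one_apply, Pi.smul_apply, smul_eq_mul]
  ring

end NeutralBitEDA

theorem neutral_bit_potential_martingale_general {Ω : Type*} [MeasurableSpace Ω]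
    (μ : Measure Ω) [IsProbabilityMeasure μ]
    (lam : ℕ) (γ : ℕ → ℝ)
    (hsum : ∑ i ∈ Finset.range (lam + 1), γ i = 1)
    (hs : (∑ i ∈ Finset.Icc 1 lam, γ i ^ 2) < 1)
    (E : NeutralBitEDA μ lam γ) :
    Martingale
      (fun (t : ℕ) (ω : Ω) =>
        E.p t ω * (1 - E.p t ω) / (1 - ∑ i ∈ Finset.Icc 1 lam, γ i ^ 2) ^ t)
      E.F μ := by
  set c := 1 - ∑ i ∈ Icc 1 lam, γ i ^ 2
  have hc : c ≠ 0 := (sub_pos.2 hs).ne'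
  refine martingale_nat (fun t => ?_) (fun t => ?_) (fun t => ?_)
  · exact (((E.adapted t).mul (measurable_const.sub (E.adapted t))).div_const _).stronglyMeasurable
  · exact (integrable_mul_of_memLp_top (E.memLp_p t)
      ((memLp_const 1).sub (E.memLp_p t))).div_const _
  · have hscale : (fun ω => E.p (t + 1) ω * (1 - E.p (t + 1) ω) / c ^ (t + 1)) =
        (c ^ (t + 1))⁻¹ • fun ω => E.p (t + 1) ω * (1 - E.p (t + 1) ω) := by
      ext ω
      simp [div_eq_inv_mul]
    rw [hscale]
    filter_upwards [condExp_smul (c ^ (t + 1))⁻¹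
        (fun ω => E.p (t + 1) ω * (1 - E.p (t + 1) ω)) (E.F t),
      E.condExp_p_succ_mul_one_sub hsum t] with ω h1 h2
    rw [h1, Pi.smul_apply, h2, smul_eq_mul, pow_succ]
    field_simp
    rfl

/-- If `s = ∑_{i=1}^lam γ i ^ 2 < 1`, then
`M t = p t * (1 - p t) / (1 - s) ^ t` is a martingale with respect to the
filtration `(F t)`. -/
theorem neutral_bit_potential_martingale {Ω : Type*} [MeasurableSpace Ω]
    (μ : Measure Ω) [IsProbabilityMeasure μ]
    (lam : ℕ) (hlam : 1 ≤ lam) (γ : ℕ → ℝ)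
    (hsum : ∑ i ∈ Finset.range (lam + 1), γ i = 1)
    (hnz : ∃ i ∈ Finset.Icc 1 lam, γ i ≠ 0)
    (hs : (∑ i ∈ Finset.Icc 1 lam, γ i ^ 2) < 1)
    (E : NeutralBitEDA μ lam γ) :
    Martingale
      (fun (t : ℕ) (ω : Ω) =>
        E.p t ω * (1 - E.p t ω) / (1 - ∑ i ∈ Finset.Icc 1 lam, γ i ^ 2) ^ t)
      E.F μ :=
  neutral_bit_potential_martingale_general μ lam γ hsum hs E
end

section
/- For every integer T ≥ 1 and every δ > 0, the neutral-bit frequency process satisfies P[ |p_t − 1/2| < δ for all t ∈ {0, 1, …, T} ] ≥ 1 − 2·exp( −δ² / (2 T s) ). -/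
open MeasureTheory ProbabilityTheory Finset
open scoped ENNReal NNReal

/-! Given `ℱ_t`, the increment `p (t+1) - p t = ∑ γ_i (x_i - p t)` is a sum of independent
centred Bernoulli variables, so by Hoeffding's lemma `E[exp (c (p (t+1) - p t)) | ℱ_t]` lies
between `1` and `exp (c² s / 8)`. Hence `exp (c (p t - 1/2))` is a nonnegative submartingale
whose mean at time `T` is at most `exp (T s c² / 8)`, and Doob's maximal inequality bounds
`P[max_{t ≤ T} ±(p t - 1/2) ≥ δ]` by `exp (T s c² / 8 - c δ)`; the choice `c = 4 δ / (T s)` gives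
`exp (-2 δ² / (T s))` for each sign. -/

open Real

noncomputable def centeredBernoulliMGF (q a : ℝ) : ℝ :=
  q * exp (a * (1 - q)) + (1 - q) * exp (a * -q)

lemma one_le_centeredBernoulliMGF {q : ℝ} (hq0 : 0 ≤ q) (hq1 : q ≤ 1) (a : ℝ) :
    1 ≤ centeredBernoulliMGF q a := by
  have h₁ := mul_le_mul_of_nonneg_left (add_one_le_exp (a * (1 - q))) hq0
  have h₂ := mul_le_mul_of_nonneg_left (add_one_le_exp (a * -q)) (sub_nonneg.2 hq1)
  unfold centeredBernoulliMGF
  nlinarith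

lemma centeredBernoulliMGF_le {q : ℝ} (hq0 : 0 ≤ q) (hq1 : q ≤ 1) (a : ℝ) :
    centeredBernoulliMGF q a ≤ exp (a ^ 2 / 8) := by
  set ν : Measure ℝ := bernoulliMeasure (1 - q) (-q) ⟨q, hq0, hq1⟩
  have hsupp : ∀ᵐ x ∂ν, x ∈ Set.Icc (-q) (1 - q) := by
    rw [ae_iff]
    apply bernoulliMeasure_apply_of_notMem_of_notMem _ measurableSet_Icc.compl <;> simp
  have hmean : ∫ x, x ∂ν = 0 := by simp [ν, integral_bernoulliMeasure]; ring
  have hoeffding := (hasSubgaussianMGF_of_mem_Icc_of_integral_eq_zero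
    aemeasurable_id hsupp hmean).mgf_le a
  rw [mgf, integral_bernoulliMeasure] at hoeffding
  convert hoeffding using 2
  · simp [centeredBernoulliMGF]
  · norm_num [show 1 - q - -q = 1 by ring]
    ring

lemma centeredBernoulliMGF_eq (q a : ℝ) :
    centeredBernoulliMGF q a = exp (a * -q) * (1 + (exp a - 1) * q) := by
  rw [centeredBernoulliMGF, show a * (1 - q) = a + a * -q by ring, exp_add]
  ring

lemma prod_centeredBernoulliMGF_le {ι : Type*} (I : Finset ι) (w : ι → ℝ) {q : ℝ}
    (hq0 : 0 ≤ q) (hq1 : q ≤ 1) (c : ℝ) :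
    ∏ i ∈ I, centeredBernoulliMGF q (c * w i) ≤ exp (c ^ 2 * (∑ i ∈ I, w i ^ 2) / 8) := by
  calc ∏ i ∈ I, centeredBernoulliMGF q (c * w i)
      ≤ ∏ i ∈ I, exp ((c * w i) ^ 2 / 8) :=
        Finset.prod_le_prod (fun i _ => zero_le_one.trans (one_le_centeredBernoulliMGF hq0 hq1 _))
          fun i _ => centeredBernoulliMGF_le hq0 hq1 _
    _ = exp (c ^ 2 * (∑ i ∈ I, w i ^ 2) / 8) := by
        rw [← exp_sum, Finset.mul_sum, Finset.sum_div]
        simp only [mul_pow]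

-- The right side is the conditional mgf of `p (t+1) - 1/2` that the update rule yields when
-- `p t = q`.
lemma exp_mul_sub_half_mul_prod_centeredBernoulliMGF {ι : Type*} (I : Finset ι) {w₀ : ℝ}
    {w : ι → ℝ} (hw : w₀ + ∑ i ∈ I, w i = 1) (c q : ℝ) :
    exp (c * (q - 1 / 2)) * ∏ i ∈ I, centeredBernoulliMGF q (c * w i) =
      exp (c * (w₀ * q - 1 / 2)) * ∏ i ∈ I, (1 + (exp (c * w i) - 1) * q) := by
  simp only [centeredBernoulliMGF_eq, Finset.prod_mul_distrib, ← exp_sum, ← mul_assoc,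
    ← exp_add]
  congr 2
  rw [← Finset.sum_mul, ← Finset.mul_sum]
  linear_combination (-(c * q)) * hw

lemma exp_mul_eq_one_add_mul_of_eq_zero_or_eq_one {x : ℝ} (hx : x = 0 ∨ x = 1) (a : ℝ) :
    exp (a * x) = 1 + (exp a - 1) * x := by
  rcases hx with rfl | rfl <;> simp

section CondExp

variable {Ω ι : Type*} {m m₀ : MeasurableSpace Ω} {μ : Measure Ω}

lemma prod_one_add_mul_eq_sum_powerset (I : Finset ι) (X : ι → Ω → ℝ) (b : ι → ℝ) :
    (fun ω => ∏ i ∈ I, (1 + b i * X i ω)) =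
      ∑ S ∈ I.powerset, (∏ i ∈ S, b i) • fun ω => ∏ i ∈ S, X i ω := by
  ext ω
  simp [Finset.prod_one_add, Finset.prod_mul_distrib]

lemma condExp_prod_one_add_mul {I : Finset ι} {X : ι → Ω → ℝ} {P : Ω → ℝ} (b : ι → ℝ)
    (hint : ∀ S ⊆ I, Integrable (fun ω => ∏ i ∈ S, X i ω) μ)
    (hmom : ∀ S ⊆ I, μ[fun ω => ∏ i ∈ S, X i ω | m] =ᵐ[μ] fun ω => P ω ^ S.card) :
    μ[fun ω => ∏ i ∈ I, (1 + b i * X i ω) | m] =ᵐ[μ] fun ω => ∏ i ∈ I, (1 + b i * P ω) := by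
  rw [prod_one_add_mul_eq_sum_powerset]
  have hterms : ∀ᵐ ω ∂μ, ∀ S ∈ I.powerset,
      μ[(∏ i ∈ S, b i) • fun ω => ∏ i ∈ S, X i ω | m] ω = (∏ i ∈ S, b i) * P ω ^ S.card := by
    rw [Filter.eventually_all_finset]
    intro S hS
    filter_upwards [condExp_smul (∏ i ∈ S, b i) (fun ω => ∏ i ∈ S, X i ω) m,
      hmom S (Finset.mem_powerset.1 hS)] with ω h₁ h₂
    rw [h₁, Pi.smul_apply, h₂, smul_eq_mul]
  have hint_smul : ∀ S ∈ I.powerset, Integrable ((∏ i ∈ S, b i) • fun ω => ∏ i ∈ S, X i ω) μ :=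
    fun S hS => (hint S (Finset.mem_powerset.1 hS)).smul _
  filter_upwards [condExp_finsetSum hint_smul m, hterms] with ω hsum hterm
  rw [hsum, Finset.sum_apply, Finset.sum_congr rfl hterm, Finset.prod_one_add]
  simp [Finset.prod_mul_distrib]

lemma integrable_prod_one_add_mul {I : Finset ι} {X : ι → Ω → ℝ} (b : ι → ℝ)
    (hint : ∀ S ⊆ I, Integrable (fun ω => ∏ i ∈ S, X i ω) μ) :
    Integrable (fun ω => ∏ i ∈ I, (1 + b i * X i ω)) μ := by
  rw [prod_one_add_mul_eq_sum_powerset]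
  exact integrable_finsetSum' _ fun S hS => (hint S (Finset.mem_powerset.1 hS)).smul _

end CondExp

section Doob

variable {Ω : Type*} {m₀ : MeasurableSpace Ω} {μ : Measure Ω}

lemma MeasureTheory.Submartingale.measure_exists_le_le_integral_div [IsFiniteMeasure μ]
    {𝓕 : Filtration ℕ m₀} {f : ℕ → Ω → ℝ} (hsub : Submartingale f 𝓕 μ) (hnonneg : 0 ≤ f)
    (n : ℕ) {r : ℝ} (hr : 0 < r) :
    μ {ω | ∃ k ≤ n, r ≤ f k ω} ≤ ENNReal.ofReal ((∫ ω, f n ω ∂μ) / r) := by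
  have hset : {ω | ∃ k ≤ n, r ≤ f k ω} =
      {ω | (r.toNNReal : ℝ) ≤ (range (n + 1)).sup' nonempty_range_add_one fun k => f k ω} := by
    ext ω
    simp [Real.coe_toNNReal _ hr.le, Finset.le_sup'_iff]
  have hdoob := maximal_ineq hsub hnonneg (ε := r.toNNReal) n
  rw [← hset] at hdoob
  have hset_le : ∫ ω in {ω | ∃ k ≤ n, r ≤ f k ω}, f n ω ∂μ ≤ ∫ ω, f n ω ∂μ :=
    setIntegral_le_integral (hsub.integrable n) (ae_of_all _ (hnonneg n))
  rw [ENNReal.ofReal_div_of_pos hr, ENNReal.le_div_iff_mul_le (Or.inl (by simpa using hr))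
    (Or.inl ENNReal.ofReal_ne_top), mul_comm]
  exact hdoob.trans (ENNReal.ofReal_le_ofReal hset_le)

end Doob

namespace NeutralBitEDA

variable {Ω : Type*} [MeasurableSpace Ω] {μ : Measure Ω} {lam : ℕ} {γ : ℕ → ℝ}
  (E : NeutralBitEDA μ lam γ)

lemma ae_forall_x_eq_zero_or_eq_one (t : ℕ) :
    ∀ᵐ ω ∂μ, ∀ i ∈ Icc 1 lam, E.x t i ω = 0 ∨ E.x t i ω = 1 :=
  (Filter.eventually_all_finset _).2 (E.x_binary t)

lemma integrable_prod_x [IsFiniteMeasure μ] (t : ℕ) {S : Finset ℕ} (hS : S ⊆ Icc 1 lam) :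
    Integrable (fun ω => ∏ i ∈ S, E.x t i ω) μ := by
  refine Integrable.of_bound (Finset.stronglyMeasurable_fun_prod _
    fun i hi => (E.meas_x t i (hS hi)).mono (E.F.le _)).aestronglyMeasurable 1 ?_
  filter_upwards [E.ae_forall_x_eq_zero_or_eq_one t] with ω hx
  rw [Real.norm_eq_abs, Finset.abs_prod]
  exact Finset.prod_le_one (fun _ _ => abs_nonneg _) fun i hi => by
    rcases hx i (hS hi) with h | h <;> simp [h]

lemma stronglyAdapted_exp_mul_sub_half (c : ℝ) :
    StronglyAdapted E.F fun t ω => exp (c * (E.p t ω - 1 / 2)) :=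
  fun t => (((E.adapted t).sub_const _).const_mul c).exp.stronglyMeasurable

lemma integrable_exp_mul_sub_half [IsFiniteMeasure μ] (c : ℝ) (t : ℕ) :
    Integrable (fun ω => exp (c * (E.p t ω - 1 / 2))) μ := by
  refine Integrable.of_bound ((E.stronglyAdapted_exp_mul_sub_half c t).mono
    (E.F.le t)).aestronglyMeasurable (exp |c|) ?_
  filter_upwards [E.p_range t] with ω hp
  rw [norm_of_nonneg (exp_pos _).le, exp_le_exp]
  calc c * (E.p t ω - 1 / 2) ≤ |c| * |E.p t ω - 1 / 2| := (le_abs_self _).trans (abs_mul _ _).le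
    _ ≤ |c| := mul_le_of_le_one_right (abs_nonneg c)
        (abs_le.2 ⟨by linarith [hp.1], by linarith [hp.2]⟩)

lemma condExp_exp_mul_sub_half_succ [IsFiniteMeasure μ]
    (hsum : γ 0 + ∑ i ∈ Icc 1 lam, γ i = 1) (c : ℝ) (t : ℕ) :
    μ[fun ω => exp (c * (E.p (t + 1) ω - 1 / 2)) | E.F t] =ᵐ[μ]
      fun ω => exp (c * (E.p t ω - 1 / 2)) *
        ∏ i ∈ Icc 1 lam, centeredBernoulliMGF (E.p t ω) (c * γ i) := by
  set b : ℕ → ℝ := fun i => exp (c * γ i) - 1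
  set h : Ω → ℝ := fun ω => exp (c * (γ 0 * E.p t ω - 1 / 2))
  set G : Ω → ℝ := fun ω => ∏ i ∈ Icc 1 lam, (1 + b i * E.x t i ω)
  have hsplit : (fun ω => exp (c * (E.p (t + 1) ω - 1 / 2))) =ᵐ[μ] h * G := by
    filter_upwards [E.update t, E.ae_forall_x_eq_zero_or_eq_one t] with ω hupd hx
    rw [Pi.mul_apply, hupd, show c * (γ 0 * E.p t ω + ∑ i ∈ Icc 1 lam, γ i * E.x t i ω - 1 / 2)
      = c * (γ 0 * E.p t ω - 1 / 2) + ∑ i ∈ Icc 1 lam, c * γ i * E.x t i ω by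
        simp only [mul_assoc, ← Finset.mul_sum]; ring, exp_add, exp_sum]
    exact congrArg _ (Finset.prod_congr rfl fun i hi =>
      exp_mul_eq_one_add_mul_of_eq_zero_or_eq_one (hx i hi) _)
  have hh : StronglyMeasurable[E.F t] h :=
    ((((E.adapted t).const_mul _).sub_const _).const_mul c).exp.stronglyMeasurable
  have hmoments := fun S (hS : S ⊆ Icc 1 lam) => E.integrable_prod_x t hS
  have hG : Integrable G μ := integrable_prod_one_add_mul b hmoments
  have hhG : Integrable (h * G) μ := (E.integrable_exp_mul_sub_half c (t + 1)).congr hsplit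
  filter_upwards [condExp_congr_ae hsplit, condExp_mul_of_stronglyMeasurable_left hh hhG hG,
    condExp_prod_one_add_mul b hmoments (E.cond_iid t)] with ω h₁ h₂ h₃
  rw [h₁, h₂, Pi.mul_apply, h₃, exp_mul_sub_half_mul_prod_centeredBernoulliMGF _ hsum]

lemma submartingale_exp_mul_sub_half [IsFiniteMeasure μ]
    (hsum : γ 0 + ∑ i ∈ Icc 1 lam, γ i = 1) (c : ℝ) :
    Submartingale (fun t ω => exp (c * (E.p t ω - 1 / 2))) E.F μ := by
  refine submartingale_nat (E.stronglyAdapted_exp_mul_sub_half c)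
    (E.integrable_exp_mul_sub_half c) fun t => ?_
  filter_upwards [E.condExp_exp_mul_sub_half_succ hsum c t, E.p_range t] with ω hω hp
  rw [hω]
  exact le_mul_of_one_le_right (exp_pos _).le
    (Finset.one_le_prod fun i _ => one_le_centeredBernoulliMGF hp.1 hp.2 _)

lemma integral_exp_mul_sub_half_le [IsProbabilityMeasure μ]
    (hsum : γ 0 + ∑ i ∈ Icc 1 lam, γ i = 1) (c : ℝ) (t : ℕ) :
    ∫ ω, exp (c * (E.p t ω - 1 / 2)) ∂μ ≤
      exp (t * (c ^ 2 * (∑ i ∈ Icc 1 lam, γ i ^ 2) / 8)) := by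
  induction t with
  | zero =>
    rw [integral_congr_ae (g := fun _ => 1) (by filter_upwards [E.p_zero] with ω h; simp [h])]
    simp
  | succ t ih =>
    have hstep : μ[fun ω => exp (c * (E.p (t + 1) ω - 1 / 2)) | E.F t] ≤ᵐ[μ]
        fun ω => exp (c ^ 2 * (∑ i ∈ Icc 1 lam, γ i ^ 2) / 8) * exp (c * (E.p t ω - 1 / 2)) := by
      filter_upwards [E.condExp_exp_mul_sub_half_succ hsum c t, E.p_range t] with ω hω hp
      rw [hω, mul_comm]
      exact mul_le_mul_of_nonneg_right (prod_centeredBernoulliMGF_le _ _ hp.1 hp.2 c)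
        (exp_pos _).le
    calc ∫ ω, exp (c * (E.p (t + 1) ω - 1 / 2)) ∂μ
        = ∫ ω, μ[fun ω => exp (c * (E.p (t + 1) ω - 1 / 2)) | E.F t] ω ∂μ :=
          (integral_condExp (E.F.le t)).symm
      _ ≤ ∫ ω, exp (c ^ 2 * (∑ i ∈ Icc 1 lam, γ i ^ 2) / 8) * exp (c * (E.p t ω - 1 / 2)) ∂μ :=
          integral_mono_ae integrable_condExp
            ((E.integrable_exp_mul_sub_half c t).const_mul _) hstep
      _ ≤ exp (c ^ 2 * (∑ i ∈ Icc 1 lam, γ i ^ 2) / 8) *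
            exp (t * (c ^ 2 * (∑ i ∈ Icc 1 lam, γ i ^ 2) / 8)) := by
          rw [integral_const_mul]
          exact mul_le_mul_of_nonneg_left ih (exp_pos _).le
      _ = exp ((t + 1 : ℕ) * (c ^ 2 * (∑ i ∈ Icc 1 lam, γ i ^ 2) / 8)) := by
          rw [← exp_add]; push_cast; ring_nf

lemma measure_exists_le_mul_sub_half_le [IsProbabilityMeasure μ]
    (hsum : γ 0 + ∑ i ∈ Icc 1 lam, γ i = 1) (c r : ℝ) (T : ℕ) :
    μ {ω | ∃ t ≤ T, r ≤ c * (E.p t ω - 1 / 2)} ≤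
      ENNReal.ofReal (exp (T * (c ^ 2 * (∑ i ∈ Icc 1 lam, γ i ^ 2) / 8) - r)) :=
  calc μ {ω | ∃ t ≤ T, r ≤ c * (E.p t ω - 1 / 2)}
      = μ {ω | ∃ t ≤ T, exp r ≤ exp (c * (E.p t ω - 1 / 2))} := by simp_rw [exp_le_exp]
    _ ≤ ENNReal.ofReal ((∫ ω, exp (c * (E.p T ω - 1 / 2)) ∂μ) / exp r) :=
        (E.submartingale_exp_mul_sub_half hsum c).measure_exists_le_le_integral_div
          (fun _ _ => (exp_pos _).le) T (exp_pos r)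
    _ ≤ ENNReal.ofReal (exp (T * (c ^ 2 * (∑ i ∈ Icc 1 lam, γ i ^ 2) / 8)) / exp r) :=
        ENNReal.ofReal_le_ofReal (div_le_div_of_nonneg_right
          (E.integral_exp_mul_sub_half_le hsum c T) (exp_pos r).le)
    _ = ENNReal.ofReal (exp (T * (c ^ 2 * (∑ i ∈ Icc 1 lam, γ i ^ 2) / 8) - r)) := by
        rw [exp_sub]

lemma measure_exists_le_abs_sub_half_le [IsProbabilityMeasure μ]
    (hsum : γ 0 + ∑ i ∈ Icc 1 lam, γ i = 1) {T : ℕ} {δ : ℝ} (hδ : 0 < δ)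
    (hTs : 0 < T * ∑ i ∈ Icc 1 lam, γ i ^ 2) :
    μ {ω | ∃ t ≤ T, δ ≤ |E.p t ω - 1 / 2|} ≤
      ENNReal.ofReal (2 * exp (-2 * δ ^ 2 / (T * ∑ i ∈ Icc 1 lam, γ i ^ 2))) := by
  set s := ∑ i ∈ Icc 1 lam, γ i ^ 2
  -- the Chernoff parameter minimising `T s κ² / 8 - κ δ`
  set κ := 4 * δ / (T * s)
  have hκ : 0 < κ := div_pos (by positivity) hTs
  set tail := fun c : ℝ => {ω | ∃ t ≤ T, κ * δ ≤ c * (E.p t ω - 1 / 2)}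
  have htail : ∀ c, c ^ 2 = κ ^ 2 → μ (tail c) ≤ ENNReal.ofReal (exp (-2 * δ ^ 2 / (T * s))) := by
    intro c hc
    convert E.measure_exists_le_mul_sub_half_le hsum c (κ * δ) T using 3
    have hκTs : κ * (T * s) = 4 * δ := div_mul_cancel₀ _ hTs.ne'
    rw [hc, div_eq_iff hTs.ne']
    linear_combination (-(κ * (T * s) - 4 * δ) / 8) * hκTs
  have hcover : {ω | ∃ t ≤ T, δ ≤ |E.p t ω - 1 / 2|} ⊆ tail κ ∪ tail (-κ) := by
    rintro ω ⟨t, ht, hdev⟩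
    rcases le_abs'.1 hdev with h | h
    · exact Or.inr ⟨t, ht, by nlinarith⟩
    · exact Or.inl ⟨t, ht, by nlinarith⟩
  calc _ ≤ μ (tail κ ∪ tail (-κ)) := measure_mono hcover
    _ ≤ μ (tail κ) + μ (tail (-κ)) := measure_union_le _ _
    _ ≤ ENNReal.ofReal (exp (-2 * δ ^ 2 / (T * s))) +
          ENNReal.ofReal (exp (-2 * δ ^ 2 / (T * s))) :=
        add_le_add (htail κ rfl) (htail (-κ) (neg_sq κ))
    _ = ENNReal.ofReal (2 * exp (-2 * δ ^ 2 / (T * s))) := by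
        rw [← ENNReal.ofReal_add (exp_pos _).le (exp_pos _).le, ← two_mul]

end NeutralBitEDA

theorem neutral_bit_concentration_general {Ω : Type*} [MeasurableSpace Ω]
    (μ : Measure Ω) [IsProbabilityMeasure μ]
    (lam : ℕ) (γ : ℕ → ℝ)
    (hsum : ∑ i ∈ Finset.range (lam + 1), γ i = 1)
    (E : NeutralBitEDA μ lam γ)
    (T : ℕ) (δ : ℝ) (hδ : 0 < δ) :
    1 - ENNReal.ofReal
        (2 * Real.exp (-δ ^ 2 /
          (2 * T * ∑ i ∈ Finset.Icc 1 lam, γ i ^ 2)))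
      ≤ μ {ω | ∀ t ≤ T, |E.p t ω - 1 / 2| < δ} := by
  set s := ∑ i ∈ Icc 1 lam, γ i ^ 2
  -- for `T = 0` or `s = 0` the division by zero turns the bound into `1 - 2 ≤ _`
  rcases Nat.eq_zero_or_pos T with rfl | hT
  · simpa using le_add_left one_le_two
  rcases (show 0 ≤ s by positivity).eq_or_lt with hs | hs
  · simpa [← hs] using le_add_left one_le_two
  have hTs : 0 < (T : ℝ) * s := by positivity
  have hsum' : γ 0 + ∑ i ∈ Icc 1 lam, γ i = 1 := by
    simpa [Finset.sum_range_eq_add_Ico _ lam.succ_pos, Finset.Ico_add_one_right_eq_Icc] using hsum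
  have hexponent : -2 * δ ^ 2 / (T * s) ≤ -δ ^ 2 / (2 * T * s) := by
    rw [div_le_div_iff₀ hTs (by positivity)]
    nlinarith [mul_pos (pow_pos hδ 2) hTs]
  set A := {ω | ∀ t ≤ T, |E.p t ω - 1 / 2| < δ}
  have hAc : μ Aᶜ ≤ ENNReal.ofReal (2 * exp (-δ ^ 2 / (2 * T * s))) := by
    have hcompl : Aᶜ = {ω | ∃ t ≤ T, δ ≤ |E.p t ω - 1 / 2|} := by
      ext
      simp [A]
    rw [hcompl]
    refine (E.measure_exists_le_abs_sub_half_le hsum' hδ hTs).trans ?_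
    gcongr
  calc _ ≤ 1 - μ Aᶜ := tsub_le_tsub_left hAc 1
    _ ≤ μ A := tsub_le_iff_right.2 (measure_univ (μ := μ) ▸ measure_univ_le_add_compl A)

/-- For every integer `T ≥ 1` and every `δ > 0`, the neutral-bit frequency
process satisfies
`P[∀ t ∈ {0,…,T}, |p t - 1/2| < δ] ≥ 1 - 2 exp(-δ² / (2 T s))`, where
`s = ∑_{i=1}^lam γ i ^ 2`. -/
theorem neutral_bit_concentration {Ω : Type*} [MeasurableSpace Ω]
    (μ : Measure Ω) [IsProbabilityMeasure μ]
    (lam : ℕ) (hlam : 1 ≤ lam) (γ : ℕ → ℝ)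
    (hsum : ∑ i ∈ Finset.range (lam + 1), γ i = 1)
    (hnz : ∃ i ∈ Finset.Icc 1 lam, γ i ≠ 0)
    (E : NeutralBitEDA μ lam γ)
    (T : ℕ) (hT : 1 ≤ T) (δ : ℝ) (hδ : 0 < δ) :
    1 - ENNReal.ofReal
        (2 * Real.exp (-δ ^ 2 /
          (2 * T * ∑ i ∈ Finset.Icc 1 lam, γ i ^ 2)))
      ≤ μ {ω | ∀ t ≤ T, |E.p t ω - 1 / 2| < δ} :=
  neutral_bit_concentration_general μ lam γ hsum E T δ hδ
end
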